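/- In the small-particle limit setup, fix t > 0 and a ∈ [−π, π), and let σ_n ∈ (0, 1] satisfy σ_n/δ_n → ∞. Then there exist a constant C(t) > 0 depending only on t, and n₀, such that for all n ≥ n₀, on the good event E(m, ε) of the n-th model one has max_{1 ≤ k ≤ ⌊nt⌋} max(|X^{σ_n}_{k,⌊nt⌋}(a)|, |Y^{σ_n}_{k,⌊nt⌋}(a)|) ≤ C(t) · √c_n / σ_n. -/

import Mathlib

open MeasureTheory ProbabilityTheory Filter Topology

noncomputable section

/-- Argument of a complex number, valued in `[-π, π)`. -/
def argNeg (z : ℂ) : ℝ := if Complex.arg z = Real.pi then -Real.pi else Complex.arg z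

/-- The closed unit disc together with the particle `P`. -/
def Kset (P : Set ℂ) : Set ℂ := {z : ℂ | ‖z‖ ≤ 1} ∪ P

/-- The exterior `D₀` of the closed unit disc. -/
def D0 : Set ℂ := {z : ℂ | 1 < ‖z‖}

/-- The complement `D` of `K = closed unit disc ∪ P` in the plane. -/
def Dset (P : Set ℂ) : Set ℂ := (Kset P)ᶜ

/-- The deterministic data of the Hastings–Levitov model: a particle `P` of diameter
at most `δ` attached to the unit disc at `1`, its logarithmic capacity `c`, and the
attaching conformal map `F : D₀ → D` with inverse `G`. -/
structure HLSetup (δ : ℝ) where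
  P : Set ℂ
  c : ℝ
  F : ℂ → ℂ
  G : ℂ → ℂ
  P_nonempty : P.Nonempty
  P_compact : IsCompact P
  P_connected : IsConnected P
  P_outside : ∀ z ∈ P, 1 ≤ ‖z‖
  P_limit : (1 : ℂ) ∈ closure (P \ {1})
  P_small : P ⊆ {z : ℂ | ‖z - 1‖ ≤ δ}
  P_tip : (1 + (δ : ℂ)) ∈ P
  P_symm : P = (fun z => (starRingEnd ℂ) z) '' P
  simply_connected :
    SimplyConnectedSpace ↥{w : OnePoint ℂ | w ∉ (fun z : ℂ => (z : OnePoint ℂ)) '' Kset P}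
  c_pos : 0 < c
  F_holo : DifferentiableOn ℂ F D0
  F_bij : Set.BijOn F D0 (Dset P)
  F_bound : ∃ R M : ℝ, ∀ z : ℂ, R ≤ ‖z‖ →
      ‖F z - (Real.exp c : ℂ) * z‖ ≤ M
  G_left : ∀ z ∈ D0, G (F z) = z
  G_right : ∀ w ∈ Dset P, F (G w) = w

/-- The randomised Hastings–Levitov model: the setup together with i.i.d. uniform
attachment angles `Θ_k` on `[-π, π)`. -/
structure HLModel (δ : ℝ) (Ω : Type*) [MeasurableSpace Ω] (μ : Measure Ω)
    extends HLSetup δ where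
  Θ : ℕ → Ω → ℝ
  Θ_meas : ∀ k, Measurable (Θ k)
  Θ_unif : ∀ k, Measure.map (Θ k) μ =
      (ENNReal.ofReal (2 * Real.pi))⁻¹ • volume.restrict (Set.Ico (-Real.pi) Real.pi)
  Θ_indep : iIndepFun Θ μ

namespace HLModel

variable {δ : ℝ} {Ω : Type*} [MeasurableSpace Ω] {μ : Measure Ω}

/-- The rotated map `F_k(z) = e^{iΘ_k} F (e^{-iΘ_k} z)`. -/
def Fk (H : HLModel δ Ω μ) (k : ℕ) (ω : Ω) (z : ℂ) : ℂ :=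
  Complex.exp ((H.Θ k ω : ℂ) * Complex.I) *
    H.F (Complex.exp (-((H.Θ k ω : ℂ) * Complex.I)) * z)

/-- The inverse rotated map `G_k = F_k⁻¹`. -/
def Gk (H : HLModel δ Ω μ) (k : ℕ) (ω : Ω) (z : ℂ) : ℂ :=
  Complex.exp ((H.Θ k ω : ℂ) * Complex.I) *
    H.G (Complex.exp (-((H.Θ k ω : ℂ) * Complex.I)) * z)

/-- `Φ_n = F_1 ∘ ⋯ ∘ F_n`. -/
def Phi (H : HLModel δ Ω μ) : ℕ → Ω → ℂ → ℂ
  | 0 => fun _ z => z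
  | n + 1 => fun ω z => Phi H n ω (H.Fk (n + 1) ω z)

/-- `Γ_n = Φ_n⁻¹ = G_n ∘ ⋯ ∘ G_1`. -/
def Gamma (H : HLModel δ Ω μ) : ℕ → Ω → ℂ → ℂ
  | 0 => fun _ z => z
  | n + 1 => fun ω z => H.Gk (n + 1) ω (Gamma H n ω z)

/-- Auxiliary chain: `Zc j = F_{n-j+1} ∘ ⋯ ∘ F_n (e^{ia+σ})`. -/
def Zc (H : HLModel δ Ω μ) (σ a : ℝ) (n : ℕ) (ω : Ω) : ℕ → ℂ
  | 0 => Complex.exp ((a : ℂ) * Complex.I + (σ : ℂ))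
  | j + 1 => H.Fk (n - j) ω (Zc H σ a n ω j)

/-- `Z^σ_{k,n}(a) = F_{k+1} ∘ ⋯ ∘ F_n (e^{ia+σ})`. -/
def Z (H : HLModel δ Ω μ) (σ a : ℝ) (k n : ℕ) (ω : Ω) : ℂ := Zc H σ a n ω (n - k)

/-- `X^σ_{k,n}(a) = (1/√c)(log |F(e^{-iΘ_k} Z^σ_{k,n}(a)) / (e^{-iΘ_k} Z^σ_{k,n}(a))| - c)`. -/
def X (H : HLModel δ Ω μ) (σ a : ℝ) (k n : ℕ) (ω : Ω) : ℝ :=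
  (Real.sqrt H.c)⁻¹ *
    (Real.log ‖(H.F (Complex.exp (-((H.Θ k ω : ℂ) * Complex.I)) * H.Z σ a k n ω) /
          (Complex.exp (-((H.Θ k ω : ℂ) * Complex.I)) * H.Z σ a k n ω))‖ - H.c)

/-- `Y^σ_{k,n}(a) = (1/√c) Arg (F(e^{-iΘ_k} Z^σ_{k,n}(a)) / (e^{-iΘ_k} Z^σ_{k,n}(a)))`,
with `Arg` valued in `[-π, π)`. -/
def Y (H : HLModel δ Ω μ) (σ a : ℝ) (k n : ℕ) (ω : Ω) : ℝ :=
  (Real.sqrt H.c)⁻¹ *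
    argNeg (H.F (Complex.exp (-((H.Θ k ω : ℂ) * Complex.I)) * H.Z σ a k n ω) /
      (Complex.exp (-((H.Θ k ω : ℂ) * Complex.I)) * H.Z σ a k n ω))

/-- `ℱ_{k,n}`, the σ-algebra generated by `Θ_k, …, Θ_n`. -/
def Flt (H : HLModel δ Ω μ) (k n : ℕ) : MeasurableSpace Ω :=
  ⨆ j ∈ Set.Icc k n, MeasurableSpace.comap (H.Θ j) inferInstance

/-- The event `E_n(ε)`. -/
def goodEventN (H : HLModel δ Ω μ) (ε : ℝ) (n : ℕ) : Set Ω :=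
  {ω | ∀ z : ℂ, Real.exp (5 * ε) ≤ ‖z‖ →
      ‖(Real.exp (-(H.c * n)) : ℂ) * H.Phi n ω z - z‖ < ε * Real.exp (6 * ε)} ∩
  {ω | ∀ z : ℂ, Real.exp (H.c * n + 4 * ε) ≤ ‖z‖ →
      ‖(Real.exp (H.c * n) : ℂ) * H.Gamma n ω z - z‖
        < ε * Real.exp (5 * ε + H.c * n)}

/-- The good event `E(m, ε) = ⋂_{n=1}^m E_n(ε)`. -/
def goodEvent (H : HLModel δ Ω μ) (ε : ℝ) (m : ℕ) : Set Ω :=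
  ⋂ n ∈ Set.Icc 1 m, H.goodEventN ε n

end HLModel

/-- `ε = δ^{2/3} log (1/δ)`. -/
def epsOf (δ : ℝ) : ℝ := δ ^ ((2 : ℝ) / 3) * Real.log (1 / δ)

/-- `m = ⌊δ^{-6}⌋`. -/
def mOf (δ : ℝ) : ℕ := ⌊δ ^ (-(6 : ℝ))⌋₊

/-! ### Auxiliary lemmas -/

open Metric Set intervalIntegral

lemma abs_argNeg_le_pi (z : ℂ) : |argNeg z| ≤ Real.pi := by
  unfold argNeg
  split
  · rw [abs_neg, abs_of_pos Real.pi_pos]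
  · exact Complex.abs_arg_le_pi z

lemma argNeg_exp_le (v : ℂ) : |argNeg (Complex.exp v)| ≤ |v.im| := by
  rcases le_or_gt Real.pi |v.im| with h | h
  · exact (abs_argNeg_le_pi _).trans h
  · have h1 : -Real.pi < v.im := (abs_lt.1 h).1
    have h2 : v.im ≤ Real.pi := (abs_lt.1 h).2.le
    have harg : Complex.arg (Complex.exp v) = v.im := by
      rw [← Complex.log_im (Complex.exp v), Complex.log_exp h1 h2]
    unfold argNeg
    rw [harg]
    split
    · next heq => exact absurd (heq ▸ (abs_lt.1 h).2) (lt_irrefl _)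
    · exact le_refl _

lemma isOpen_D0 : IsOpen D0 := by
  have : D0 = (fun z : ℂ => ‖z‖) ⁻¹' (Set.Ioi 1) := rfl
  rw [this]
  exact isOpen_Ioi.preimage continuous_norm

namespace HLSetup

variable {δ : ℝ} (S : HLSetup δ)

lemma F_abs_gt {z : ℂ} (hz : 1 < ‖z‖) : 1 < ‖S.F z‖ := by
  have hmem : S.F z ∈ Dset S.P := S.F_bij.mapsTo hz
  by_contra hle
  exact hmem (Or.inl (not_lt.1 hle))

/-- The function `h(w) = w · F(1/w)`, extended by `e^c` at `0`. -/
noncomputable def hfun : ℂ → ℂ := fun w =>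
  if w = 0 then (Real.exp S.c : ℂ) else w * S.F w⁻¹

lemma hfun_zero : S.hfun 0 = (Real.exp S.c : ℂ) := if_pos rfl

lemma hfun_abs_gt {w : ℂ} (hw : w ∈ ball (0 : ℂ) 1) :
    ‖w‖ < ‖S.hfun w‖ := by
  by_cases h0 : w = 0
  · subst h0
    simp [hfun, Complex.norm_real, Real.norm_eq_abs, abs_of_pos (Real.exp_pos _), Real.exp_pos]
  · rw [mem_ball_zero_iff] at hw
    have hpos : 0 < ‖w‖ := norm_pos_iff.mpr h0
    have hinv : 1 < ‖w⁻¹‖ := by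
      rw [norm_inv]
      exact (one_lt_inv₀ hpos).2 hw
    have hF := S.F_abs_gt hinv
    rw [hfun, if_neg h0, norm_mul]
    nlinarith

lemma hfun_ne_zero {w : ℂ} (hw : w ∈ ball (0 : ℂ) 1) : S.hfun w ≠ 0 := by
  have := S.hfun_abs_gt hw
  intro h
  rw [h, norm_zero] at this
  exact absurd this (not_lt.2 (norm_nonneg w))

lemma hfun_diffOn : DifferentiableOn ℂ S.hfun (ball (0 : ℂ) 1) := by
  have hball : ball (0 : ℂ) 1 ∈ 𝓝 (0 : ℂ) := ball_mem_nhds _ one_pos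
  rw [← Complex.differentiableOn_compl_singleton_and_continuousAt_iff hball]
  constructor
  · have h1 : DifferentiableOn ℂ (fun w : ℂ => w * S.F w⁻¹) (ball (0 : ℂ) 1 \ {0}) := by
      intro w hw
      have hw0 : w ≠ 0 := hw.2
      have hw1 : ‖w‖ < 1 := by
        have := hw.1; rwa [mem_ball_zero_iff] at this
      have hinv : 1 < ‖w⁻¹‖ := by
        rw [norm_inv]; exact (one_lt_inv₀ (norm_pos_iff.mpr hw0)).2 hw1
      have hF : DifferentiableAt ℂ S.F w⁻¹ :=
        S.F_holo.differentiableAt (isOpen_D0.mem_nhds hinv)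
      exact (differentiableAt_id.mul (hF.comp w (differentiableAt_inv hw0))).differentiableWithinAt
    exact h1.congr fun w hw => if_neg hw.2
  · obtain ⟨R, M, hRM⟩ := S.F_bound
    set M' := max M 0 with hM'
    set R' := max R 1 with hR'
    have hR'pos : (0 : ℝ) < R' := lt_of_lt_of_le one_pos (le_max_right _ _)
    have key : ∀ w : ℂ, ‖w‖ < R'⁻¹ →
        ‖S.hfun w - (Real.exp S.c : ℂ)‖ ≤ M' * ‖w‖ := by
      intro w hw
      by_cases h0 : w = 0
      · simp [h0, hfun]
      · have hwpos : 0 < ‖w‖ := norm_pos_iff.mpr h0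
        have habs : R ≤ ‖w⁻¹‖ := by
          rw [norm_inv]
          have h1 : R' < (‖w‖)⁻¹ := by
            rw [← inv_inv R']
            exact inv_strictAnti₀ hwpos hw
          exact le_trans (le_max_left _ _) h1.le
        have hb := hRM _ habs
        have heq : S.hfun w - (Real.exp S.c : ℂ)
            = w * (S.F w⁻¹ - (Real.exp S.c : ℂ) * w⁻¹) := by
          rw [hfun, if_neg h0]
          field_simp
        rw [heq, norm_mul]
        calc ‖w‖ * ‖S.F w⁻¹ - (Real.exp S.c : ℂ) * w⁻¹‖
            ≤ ‖w‖ * M := by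
              exact mul_le_mul_of_nonneg_left hb (norm_nonneg w)
          _ ≤ M' * ‖w‖ := by
              rw [mul_comm]
              exact mul_le_mul_of_nonneg_right (le_max_left _ _) (norm_nonneg w)
    have htend : Filter.Tendsto (fun w => S.hfun w - (Real.exp S.c : ℂ)) (𝓝 0) (𝓝 0) := by
      apply squeeze_zero_norm' (a := fun w => M' * ‖w‖)
      · filter_upwards [ball_mem_nhds (0 : ℂ) (inv_pos.2 hR'pos)] with w hw
        rw [mem_ball_zero_iff] at hw
        exact key w hw
      · have : Filter.Tendsto (fun w : ℂ => M' * ‖w‖) (𝓝 0)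
            (𝓝 (M' * ‖(0:ℂ)‖)) :=
          (continuous_const.mul continuous_norm).tendsto 0
        simpa using this
    have : Filter.Tendsto S.hfun (𝓝 0) (𝓝 (Real.exp S.c : ℂ)) := by
      have h := htend.add_const (Real.exp S.c : ℂ)
      simpa using h
    rw [ContinuousAt, S.hfun_zero]
    exact this

lemma hfun_abs_ge_one {w : ℂ} (hw : w ∈ ball (0 : ℂ) 1) :
    1 ≤ ‖S.hfun w‖ := by
  set g : ℂ → ℂ := fun w => w / S.hfun w with hg
  have gd : DifferentiableOn ℂ g (ball (0 : ℂ) 1) :=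
    differentiableOn_id.div S.hfun_diffOn fun x hx => S.hfun_ne_zero hx
  have gm : Set.MapsTo g (ball (0 : ℂ) 1) (ball (0 : ℂ) 1) := by
    intro x hx
    rw [mem_ball_zero_iff, hg, norm_div]
    have h1 := S.hfun_abs_gt hx
    have h2 : 0 < ‖S.hfun x‖ := lt_of_le_of_lt (norm_nonneg x) h1
    rw [div_lt_one h2]
    exact h1
  have g0 : g 0 = 0 := by simp [hg]
  have hw1 : ‖w‖ < 1 := by
    rw [mem_ball_zero_iff] at hw
    exact hw
  have hSch := Complex.norm_le_norm_of_mapsTo_ball_self gd (gm.mono_right ball_subset_closedBall) g0 hw1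
  by_cases h0 : w = 0
  · subst h0
    rw [S.hfun_zero, Complex.norm_real, Real.norm_eq_abs, abs_of_pos (Real.exp_pos _)]
    exact Real.one_le_exp S.c_pos.le
  · have hwpos : 0 < ‖w‖ := norm_pos_iff.mpr h0
    have hgw : ‖g w‖ = ‖w‖ / ‖S.hfun w‖ := by
      rw [hg, norm_div]
    rw [hgw] at hSch
    have hpos : 0 < ‖S.hfun w‖ :=
      lt_of_le_of_lt (norm_nonneg w) (S.hfun_abs_gt hw)
    rw [div_le_iff₀ hpos] at hSch
    have := le_of_mul_le_mul_left (by linarith [hSch] : ‖w‖ * 1 ≤ ‖w‖ * ‖S.hfun w‖) hwpos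
    linarith

lemma F_abs_ge {z : ℂ} (hz : 1 < ‖z‖) :
    ‖z‖ ≤ ‖S.F z‖ := by
  have hz0 : z ≠ 0 := by
    intro h; rw [h, norm_zero] at hz; linarith
  have hw : z⁻¹ ∈ ball (0 : ℂ) 1 := by
    rw [mem_ball_zero_iff, norm_inv]
    exact inv_lt_one_of_one_lt₀ hz
  have h1 := S.hfun_abs_ge_one hw
  have hne : (z⁻¹ : ℂ) ≠ 0 := inv_ne_zero hz0
  rw [hfun, if_neg hne, inv_inv, norm_mul, norm_inv] at h1
  have hzpos : 0 < ‖z‖ := norm_pos_iff.mpr hz0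
  rw [inv_mul_eq_div, one_le_div hzpos] at h1
  exact h1

/-- The logarithmic derivative of `hfun`. -/
noncomputable def qfun : ℂ → ℂ := fun z => deriv S.hfun z / S.hfun z

lemma qfun_contOn : ContinuousOn S.qfun (ball (0 : ℂ) 1) := by
  have ha : AnalyticOnNhd ℂ S.hfun (ball (0 : ℂ) 1) :=
    S.hfun_diffOn.analyticOnNhd isOpen_ball
  exact (ha.deriv.continuousOn).div S.hfun_diffOn.continuousOn
    fun w hw => S.hfun_ne_zero hw

/-- A holomorphic logarithm of `hfun` on the unit ball, normalized by `v 0 = c`. -/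
noncomputable def vfun : ℂ → ℂ := fun w =>
  (S.c : ℂ) + ∫ t in (0 : ℝ)..1, w * S.qfun ((t : ℂ) * w)

lemma vfun_zero : S.vfun 0 = (S.c : ℂ) := by
  simp [vfun]

lemma exp_vfun {w : ℂ} (hw : w ∈ ball (0 : ℂ) 1) :
    Complex.exp (S.vfun w) = S.hfun w := by
  by_cases h0 : w = 0
  · subst h0
    rw [S.vfun_zero, S.hfun_zero, Complex.ofReal_exp]
  · have hw1 : ‖w‖ < 1 := by
      rwa [mem_ball_zero_iff] at hw
    have hwpos : 0 < ‖w‖ := norm_pos_iff.mpr h0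
    set T : ℝ := (‖w‖)⁻¹ with hT
    have hT1 : 1 < T := (one_lt_inv₀ hwpos).2 hw1
    set g : ℝ → ℂ := fun s => w * S.qfun ((s : ℂ) * w) with hgdef
    have hmaps : ∀ s : ℝ, |s| < T → ((s : ℂ) * w) ∈ ball (0 : ℂ) 1 := by
      intro s hs
      rw [mem_ball_zero_iff, norm_mul, Complex.norm_real, Real.norm_eq_abs]
      calc |s| * ‖w‖ < T * ‖w‖ :=
            mul_lt_mul_of_pos_right hs hwpos
        _ = 1 := by rw [hT]; field_simp
    have hIoo : IsOpen (Set.Ioo (-T) T) := isOpen_Ioo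
    have gcont : ContinuousOn g (Set.Ioo (-T) T) := by
      apply continuousOn_const.mul
      apply S.qfun_contOn.comp
      · exact (Complex.continuous_ofReal.continuousOn).mul continuousOn_const
      · intro s hs
        exact hmaps s (abs_lt.2 ⟨hs.1, hs.2⟩)
    have hsub : Set.Icc (0 : ℝ) 1 ⊆ Set.Ioo (-T) T := fun s hs =>
      ⟨by linarith [hs.1], lt_of_le_of_lt hs.2 hT1⟩
    have gderiv : ∀ t ∈ Set.Icc (0 : ℝ) 1,
        HasDerivAt (fun u => ∫ s in (0 : ℝ)..u, g s) (g t) t := by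
      intro t ht
      have htT : t ∈ Set.Ioo (-T) T := hsub ht
      apply intervalIntegral.integral_hasDerivAt_right
      · apply ContinuousOn.intervalIntegrable
        apply gcont.mono
        intro s hs
        rw [Set.uIcc_of_le ht.1] at hs
        exact hsub ⟨hs.1, le_trans hs.2 ht.2⟩
      · exact gcont.stronglyMeasurableAtFilter hIoo t htT
      · exact gcont.continuousAt (hIoo.mem_nhds htT)
    set φ : ℝ → ℂ := fun t =>
      Complex.exp (-(∫ s in (0 : ℝ)..t, g s)) * S.hfun ((t : ℂ) * w) with hφdef
    have φderiv : ∀ t ∈ Set.Icc (0 : ℝ) 1, HasDerivAt φ 0 t := by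
      intro t ht
      have htm : ((t : ℂ) * w) ∈ ball (0 : ℂ) 1 := by
        apply hmaps
        rw [abs_of_nonneg ht.1]
        exact lt_of_le_of_lt ht.2 hT1
      have e1 : HasDerivAt (fun u : ℝ => Complex.exp (-(∫ s in (0 : ℝ)..u, g s)))
          (Complex.exp (-(∫ s in (0 : ℝ)..t, g s)) * (-(g t))) t :=
        ((gderiv t ht).neg).cexp
      have hin : HasDerivAt (fun u : ℝ => (u : ℂ) * w) w t := by
        have := (hasDerivAt_id t).smul_const w
        simp only [one_smul] at this
        convert this using 1
        · rfl
        · funext y; simp [Complex.real_smul]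
      have hout : HasDerivAt S.hfun (deriv S.hfun ((t : ℂ) * w)) ((t : ℂ) * w) :=
        (S.hfun_diffOn.differentiableAt (isOpen_ball.mem_nhds htm)).hasDerivAt
      have e2 : HasDerivAt (fun u : ℝ => S.hfun ((u : ℂ) * w))
          (w • deriv S.hfun ((t : ℂ) * w)) t := by have h := hout.scomp t hin; exact h
      have hprod := e1.mul e2
      have hzero : Complex.exp (-(∫ s in (0 : ℝ)..t, g s)) * (-(g t)) * S.hfun ((t : ℂ) * w)
          + Complex.exp (-(∫ s in (0 : ℝ)..t, g s)) * (w • deriv S.hfun ((t : ℂ) * w)) = 0 := by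
        have hne := S.hfun_ne_zero htm
        rw [smul_eq_mul, hgdef]
        simp only [qfun]
        field_simp
        rw [mul_comm w (t : ℂ), div_self hne]; ring
      rw [hzero] at hprod
      exact hprod
    have hconst : φ 1 = φ 0 := by
      apply constant_of_has_deriv_right_zero
        (fun t ht => ((φderiv t ht).continuousAt).continuousWithinAt)
        (fun t ht => (φderiv t (Set.Ico_subset_Icc_self ht)).hasDerivWithinAt)
        1 (Set.right_mem_Icc.2 zero_le_one)
    have hφ0 : φ 0 = (Real.exp S.c : ℂ) := by
      rw [hφdef]
      simp [intervalIntegral.integral_same, S.hfun_zero]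
    have hφ1 : Complex.exp (-(∫ s in (0 : ℝ)..1, g s)) * S.hfun w = (Real.exp S.c : ℂ) := by
      have := hconst
      rw [hφ0] at this
      rw [hφdef] at this
      simpa using this
    have hmul := congrArg
      (fun x => Complex.exp (∫ s in (0 : ℝ)..1, g s) * x) hφ1
    simp only [← mul_assoc, ← Complex.exp_add] at hmul
    rw [add_neg_cancel, Complex.exp_zero, one_mul] at hmul
    have hgoal : S.vfun w = (S.c : ℂ) + ∫ s in (0 : ℝ)..1, g s := rfl
    rw [hgoal, Complex.exp_add, hmul, Complex.ofReal_exp]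
    ring

lemma vfun_contAt {w₀ : ℂ} (hw : w₀ ∈ ball (0 : ℂ) 1) : ContinuousAt S.vfun w₀ := by
  have hw1 : ‖w₀‖ < 1 := by
    rwa [mem_ball_zero_iff] at hw
  set ρ : ℝ := (1 + ‖w₀‖) / 2 with hρ
  have hρ1 : ρ < 1 := by rw [hρ]; linarith
  have hρ0 : ‖w₀‖ < ρ := by rw [hρ]; linarith
  have hρpos : 0 < ρ := lt_of_le_of_lt (norm_nonneg w₀) hρ0
  obtain ⟨M₁, hM₁⟩ := (isCompact_closedBall (0 : ℂ) ρ).exists_bound_of_continuousOn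
    (S.qfun_contOn.mono (closedBall_subset_ball hρ1))
  apply ContinuousAt.add continuousAt_const
  apply intervalIntegral.continuousAt_of_dominated_interval
    (bound := fun _ => ρ * M₁)
  · have hev : ∀ᶠ x in 𝓝 w₀, ‖x‖ < ρ := by
      have : ContinuousAt (fun x : ℂ => ‖x‖) w₀ :=
        continuous_norm.continuousAt
      exact this.eventually_lt continuousAt_const hρ0
    filter_upwards [hev] with x hx
    apply ContinuousOn.aestronglyMeasurable _ measurableSet_uIoc
    intro t ht
    have htmem : ((t : ℂ) * x) ∈ ball (0 : ℂ) 1 := by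
      rw [Set.uIoc_of_le zero_le_one] at ht
      rw [mem_ball_zero_iff, norm_mul, Complex.norm_real, Real.norm_eq_abs,
        abs_of_pos ht.1]
      nlinarith [norm_nonneg x, ht.2]
    have hcin : ContinuousWithinAt (fun s : ℝ => (s : ℂ) * x) (Set.uIoc (0:ℝ) 1) t :=
      (Complex.continuous_ofReal.continuousWithinAt).mul continuousWithinAt_const
    have hcomp := ContinuousAt.comp_continuousWithinAt
      (f := fun s : ℝ => (s : ℂ) * x) (x := t)
      (S.qfun_contOn.continuousAt (isOpen_ball.mem_nhds htmem)) hcin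
    exact continuousWithinAt_const.mul hcomp
  · have hev : ∀ᶠ x in 𝓝 w₀, ‖x‖ < ρ := by
      exact (continuous_norm.continuousAt).eventually_lt continuousAt_const hρ0
    filter_upwards [hev] with x hx
    apply Filter.Eventually.of_forall
    intro t ht
    rw [Set.uIoc_of_le zero_le_one] at ht
    have htmem : ((t : ℂ) * x) ∈ closedBall (0 : ℂ) ρ := by
      rw [mem_closedBall_zero_iff, norm_mul, Complex.norm_real, Real.norm_eq_abs,
        abs_of_pos ht.1]
      nlinarith [norm_nonneg x, ht.2, ht.1.le]
    have hq := hM₁ _ htmem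
    rw [norm_mul]
    exact mul_le_mul hx.le hq (norm_nonneg _) hρpos.le
  · exact intervalIntegrable_const
  · apply Filter.Eventually.of_forall
    intro t ht
    rw [Set.uIoc_of_le zero_le_one] at ht
    have htmem : ((t : ℂ) * w₀) ∈ ball (0 : ℂ) 1 := by
      rw [mem_ball_zero_iff, norm_mul, Complex.norm_real, Real.norm_eq_abs,
        abs_of_pos ht.1]
      nlinarith [norm_nonneg w₀, ht.2]
    have hcin : ContinuousAt (fun x : ℂ => (t : ℂ) * x) w₀ :=
      continuousAt_const.mul continuousAt_id
    have hcomp := ContinuousAt.comp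
      (f := fun x : ℂ => (t : ℂ) * x) (x := w₀)
      (S.qfun_contOn.continuousAt (isOpen_ball.mem_nhds htmem)) hcin
    exact continuousAt_id.mul hcomp

lemma vfun_diffOn : DifferentiableOn ℂ S.vfun (ball (0 : ℂ) 1) := by
  intro w₀ hw₀
  apply DifferentiableAt.differentiableWithinAt
  have hcont := S.vfun_contAt hw₀
  have hne := S.hfun_ne_zero hw₀
  have heq : S.vfun =ᶠ[𝓝 w₀]
      fun w => S.vfun w₀ + Complex.log (S.hfun w / S.hfun w₀) := by
    have h1 : ∀ᶠ w in 𝓝 w₀, w ∈ ball (0 : ℂ) 1 :=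
      isOpen_ball.eventually_mem hw₀
    have h2 : ∀ᶠ w in 𝓝 w₀, ‖S.vfun w - S.vfun w₀‖ < Real.pi := by
      have hc2 : ContinuousAt (fun w => ‖S.vfun w - S.vfun w₀‖) w₀ :=
        continuous_norm.continuousAt.comp (hcont.sub continuousAt_const)
      have h0 : ‖S.vfun w₀ - S.vfun w₀‖ < Real.pi := by
        simp [Real.pi_pos]
      exact hc2.eventually_lt continuousAt_const h0
    filter_upwards [h1, h2] with w hw1 hw2
    have hexp : Complex.exp (S.vfun w - S.vfun w₀) = S.hfun w / S.hfun w₀ := by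
      rw [Complex.exp_sub, S.exp_vfun hw1, S.exp_vfun hw₀]
    have him : |(S.vfun w - S.vfun w₀).im| < Real.pi :=
      lt_of_le_of_lt (Complex.abs_im_le_norm _) hw2
    have hlog := Complex.log_exp (abs_lt.1 him).1 (abs_lt.1 him).2.le
    rw [hexp] at hlog
    rw [hlog]
    ring
  have hdiff : DifferentiableAt ℂ
      (fun w => S.vfun w₀ + Complex.log (S.hfun w / S.hfun w₀)) w₀ := by
    apply DifferentiableAt.const_add
    apply DifferentiableAt.clog
    · exact (S.hfun_diffOn.differentiableAt (isOpen_ball.mem_nhds hw₀)).div_const _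
    · rw [div_self hne]
      exact Complex.one_mem_slitPlane
  exact hdiff.congr_of_eventuallyEq heq

lemma vfun_re_nonneg {w : ℂ} (hw : w ∈ ball (0 : ℂ) 1) : 0 ≤ (S.vfun w).re := by
  have h1 : 1 ≤ Real.exp ((S.vfun w).re) := by
    rw [← Complex.norm_exp, S.exp_vfun hw]
    exact S.hfun_abs_ge_one hw
  by_contra hneg
  push_neg at hneg
  have := Real.exp_lt_one_iff.mpr hneg
  linarith

lemma vfun_est {w : ℂ} (hw : w ∈ ball (0 : ℂ) 1) :
    (1 - ‖w‖) * ‖S.vfun w - (S.c : ℂ)‖ ≤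
      2 * S.c * ‖w‖ := by
  have habs : ‖w‖ < 1 := by
    rwa [mem_ball_zero_iff] at hw
  have hcpos := S.c_pos
  have key : ∀ t : ℝ, 0 < t →
      ‖S.vfun w - (S.c : ℂ)‖ ≤
        ‖w‖ * (‖S.vfun w - (S.c : ℂ)‖ + (2 * S.c + 2 * t)) := by
    intro t ht
    set B : ℂ → ℂ := fun x =>
      (S.vfun x - (S.c : ℂ)) / (S.vfun x + (S.c : ℂ) + ((2 * t : ℝ) : ℂ)) with hBdef
    have hden : ∀ x ∈ ball (0 : ℂ) 1, S.vfun x + (S.c : ℂ) + ((2 * t : ℝ) : ℂ) ≠ 0 := by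
      intro x hx hzero
      have hre : (S.vfun x + (S.c : ℂ) + ((2 * t : ℝ) : ℂ)).re = 0 := by
        rw [hzero]; simp
      simp only [Complex.add_re, Complex.ofReal_re] at hre
      have := S.vfun_re_nonneg hx
      linarith
    have hBd : DifferentiableOn ℂ B (ball (0 : ℂ) 1) := by
      apply DifferentiableOn.div
      · exact S.vfun_diffOn.sub_const _
      · exact (S.vfun_diffOn.add_const _).add_const _
      · exact hden
    have hB0 : B 0 = 0 := by
      rw [hBdef]
      simp [S.vfun_zero]
    have hBm : Set.MapsTo B (ball (0 : ℂ) 1) (ball (0 : ℂ) 1) := by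
      intro x hx
      rw [mem_ball_zero_iff, hBdef, norm_div]
      have hre := S.vfun_re_nonneg hx
      have hlt : Complex.normSq (S.vfun x - (S.c : ℂ)) <
          Complex.normSq (S.vfun x + (S.c : ℂ) + ((2 * t : ℝ) : ℂ)) := by
        simp only [Complex.normSq_apply, Complex.sub_re, Complex.add_re, Complex.sub_im,
          Complex.add_im, Complex.ofReal_re, Complex.ofReal_im, add_zero]
        nlinarith [hre, hcpos, ht]
      have habslt : ‖S.vfun x - (S.c : ℂ)‖ <
          ‖S.vfun x + (S.c : ℂ) + ((2 * t : ℝ) : ℂ)‖ := by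
        rw [Complex.norm_def, Complex.norm_def]
        exact Real.sqrt_lt_sqrt (Complex.normSq_nonneg _) hlt
      have hdenpos : 0 < ‖S.vfun x + (S.c : ℂ) + ((2 * t : ℝ) : ℂ)‖ :=
        lt_of_le_of_lt (norm_nonneg _) habslt
      rw [div_lt_one hdenpos]
      exact habslt
    have hSch := Complex.norm_le_norm_of_mapsTo_ball_self hBd (hBm.mono_right ball_subset_closedBall) hB0 habs
    have hdw := hden w hw
    have hfactor : ‖S.vfun w - (S.c : ℂ)‖ =
        ‖B w‖ * ‖S.vfun w + (S.c : ℂ) + ((2 * t : ℝ) : ℂ)‖ := by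
      simp only [hBdef]
      rw [norm_div, div_mul_cancel₀ _ (norm_ne_zero_iff.mpr hdw)]
    have htri : ‖S.vfun w + (S.c : ℂ) + ((2 * t : ℝ) : ℂ)‖ ≤
        ‖S.vfun w - (S.c : ℂ)‖ + (2 * S.c + 2 * t) := by
      have hrw : S.vfun w + (S.c : ℂ) + ((2 * t : ℝ) : ℂ) =
          (S.vfun w - (S.c : ℂ)) + (((2 * S.c + 2 * t : ℝ)) : ℂ) := by
        push_cast
        ring
      rw [hrw]
      refine (norm_add_le _ _).trans ?_
      rw [Complex.norm_real, Real.norm_eq_abs, abs_of_nonneg (by linarith)]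
    conv_lhs => rw [hfactor]
    exact mul_le_mul hSch htri (norm_nonneg _) (norm_nonneg _)
  have lim : ∀ ε : ℝ, 0 < ε →
      (1 - ‖w‖) * ‖S.vfun w - (S.c : ℂ)‖ ≤
        2 * S.c * ‖w‖ + ε := by
    intro ε hε
    have hk := key (ε / 2) (by linarith)
    nlinarith [norm_nonneg w, norm_nonneg (S.vfun w - (S.c : ℂ)), habs]
  exact le_of_forall_pos_le_add lim

lemma main_est {z : ℂ} {σ : ℝ} (hσ : 0 < σ) (hz : Real.exp σ ≤ ‖z‖) :
    |Real.log (‖S.F z / z‖) - S.c| ≤ 2 * S.c / σ ∧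
      |argNeg (S.F z / z)| ≤ 2 * S.c / σ := by
  have hone : (1 : ℝ) < Real.exp σ := by
    rw [← Real.exp_zero]
    exact Real.exp_lt_exp.mpr hσ
  have hz1 : 1 < ‖z‖ := lt_of_lt_of_le hone hz
  have hz0 : z ≠ 0 := by
    intro h; rw [h, norm_zero] at hz1; linarith
  have hzpos : 0 < ‖z‖ := norm_pos_iff.mpr hz0
  set w : ℂ := z⁻¹ with hwdef
  have hwabs : ‖w‖ = (‖z‖)⁻¹ := by rw [hwdef, norm_inv]
  have hwlt : ‖w‖ < 1 := by
    rw [hwabs]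
    exact inv_lt_one_of_one_lt₀ hz1
  have hw : w ∈ ball (0 : ℂ) 1 := by
    rw [mem_ball_zero_iff]
    exact hwlt
  have hwne : w ≠ 0 := inv_ne_zero hz0
  have hhw : S.hfun w = S.F z / z := by
    rw [HLSetup.hfun, if_neg hwne, hwdef, inv_inv]
    rw [div_eq_inv_mul]
  set u : ℂ := S.vfun w with hudef
  have hexpu : Complex.exp u = S.F z / z := by
    rw [hudef, S.exp_vfun hw, hhw]
  -- the Herglotz-type bound
  have hest := S.vfun_est hw
  have h1w : 0 < 1 - ‖w‖ := by linarith
  -- |w| (1 + σ) ≤ 1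
  have hwexp : ‖w‖ ≤ (Real.exp σ)⁻¹ := by
    rw [hwabs]
    exact inv_anti₀ (lt_of_lt_of_le one_pos hone.le) hz
  have hkey : ‖w‖ * (1 + σ) ≤ 1 := by
    have h2 : 1 + σ ≤ Real.exp σ := by
      have := Real.add_one_le_exp σ
      linarith
    have h3 : ‖w‖ * (1 + σ) ≤ (Real.exp σ)⁻¹ * Real.exp σ :=
      mul_le_mul hwexp h2 (by linarith) (by positivity)
    rwa [inv_mul_cancel₀ (by positivity : Real.exp σ ≠ 0)] at h3
  have hub : ‖u - (S.c : ℂ)‖ ≤ 2 * S.c / σ := by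
    rw [← hudef] at hest
    have hcpos := S.c_pos
    have h4 : σ * ((1 - ‖w‖) * ‖u - (S.c : ℂ)‖)
        ≤ σ * (2 * S.c * ‖w‖) := by
      exact mul_le_mul_of_nonneg_left hest hσ.le
    have h5 : σ * ‖w‖ ≤ 1 - ‖w‖ := by nlinarith
    have habs0 : 0 ≤ ‖u - (S.c : ℂ)‖ := norm_nonneg _
    rw [le_div_iff₀ hσ]
    nlinarith [norm_nonneg w]
  constructor
  · have hre : Real.log (‖S.F z / z‖) = u.re := by
      rw [← hexpu, Complex.norm_exp, Real.log_exp]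
    rw [hre]
    have : |u.re - S.c| = |(u - (S.c : ℂ)).re| := by
      rw [Complex.sub_re, Complex.ofReal_re]
    rw [this]
    exact (Complex.abs_re_le_norm _).trans hub
  · rw [← hexpu]
    refine (argNeg_exp_le u).trans ?_
    have : |u.im| = |(u - (S.c : ℂ)).im| := by
      rw [Complex.sub_im, Complex.ofReal_im, sub_zero]
    rw [this]
    exact (Complex.abs_im_le_norm _).trans hub

end HLSetup

lemma abs_exp_mul_I (θ : ℝ) : ‖Complex.exp ((θ : ℂ) * Complex.I)‖ = 1 := by
  rw [Complex.norm_exp]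
  simp [Complex.mul_re]

lemma abs_exp_neg_mul_I (θ : ℝ) :
    ‖Complex.exp (-((θ : ℂ) * Complex.I))‖ = 1 := by
  rw [Complex.norm_exp]
  simp [Complex.mul_re]

namespace HLModel

variable {δ : ℝ} {Ω : Type*} [MeasurableSpace Ω] {μ : Measure Ω}

lemma abs_Fk_ge (H : HLModel δ Ω μ) (k : ℕ) (ω : Ω) {z : ℂ}
    (hz : 1 < ‖z‖) : ‖z‖ ≤ ‖H.Fk k ω z‖ := by
  rw [HLModel.Fk, norm_mul, abs_exp_mul_I, one_mul]
  have habs : ‖Complex.exp (-((H.Θ k ω : ℂ) * Complex.I)) * z‖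
      = ‖z‖ := by
    rw [norm_mul, abs_exp_neg_mul_I, one_mul]
  have h1 : 1 < ‖Complex.exp (-((H.Θ k ω : ℂ) * Complex.I)) * z‖ := by
    rw [habs]; exact hz
  have := H.toHLSetup.F_abs_ge h1
  rwa [habs] at this

lemma abs_Zc_ge (H : HLModel δ Ω μ) {σ : ℝ} (hσ : 0 < σ) (a : ℝ) (n : ℕ) (ω : Ω) :
    ∀ j : ℕ, Real.exp σ ≤ ‖H.Zc σ a n ω j‖ := by
  have hone : (1 : ℝ) < Real.exp σ := by
    rw [← Real.exp_zero]; exact Real.exp_lt_exp.mpr hσ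
  intro j
  induction j with
  | zero =>
      rw [HLModel.Zc, Complex.norm_exp]
      simp [Complex.mul_re]
  | succ j ih =>
      rw [HLModel.Zc]
      exact le_trans ih (H.abs_Fk_ge _ ω (lt_of_lt_of_le hone ih))

lemma abs_Z_ge (H : HLModel δ Ω μ) {σ : ℝ} (hσ : 0 < σ) (a : ℝ) (k n : ℕ) (ω : Ω) :
    Real.exp σ ≤ ‖H.Z σ a k n ω‖ :=
  H.abs_Zc_ge hσ a n ω (n - k)

end HLModel

/-- **Lemma 3.5.** In the small-particle limit (`δ_n → 0`, `n c_n → 1`), if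
`σ_n ∈ (0,1]` with `σ_n/δ_n → ∞`, then there is a constant `C(t) > 0` such
that, for all large `n`, on the good event `E(m, ε)` of the `n`-th model,
`max(|X^{σ_n}_{k,⌊nt⌋}(a)|, |Y^{σ_n}_{k,⌊nt⌋}(a)|) ≤ C(t) √c_n / σ_n` for all
`1 ≤ k ≤ ⌊nt⌋`. -/
theorem good_event_bounds {Ω : Type*} [MeasurableSpace Ω] {μ : Measure Ω}
    [IsProbabilityMeasure μ]
    (δseq : ℕ → ℝ) (hδpos : ∀ n, 0 < δseq n) (hδ0 : Tendsto δseq atTop (𝓝 0))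
    (H : ∀ n : ℕ, HLModel (δseq n) Ω μ)
    (hc : Tendsto (fun n : ℕ => (n : ℝ) * (H n).c) atTop (𝓝 1))
    (t : ℝ) (ht : 0 < t) (a : ℝ) (ha : a ∈ Set.Ico (-Real.pi) Real.pi)
    (σseq : ℕ → ℝ) (hσ : ∀ n, σseq n ∈ Set.Ioc (0 : ℝ) 1)
    (hσδ : Tendsto (fun n => σseq n / δseq n) atTop atTop) :
    ∃ C : ℝ, 0 < C ∧ ∃ n₀ : ℕ, ∀ n ≥ n₀,
      ∀ ω ∈ (H n).goodEvent (epsOf (δseq n)) (mOf (δseq n)),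
        ∀ k : ℕ, 1 ≤ k → k ≤ ⌊(n : ℝ) * t⌋₊ →
          max |(H n).X (σseq n) a k ⌊(n : ℝ) * t⌋₊ ω|
              |(H n).Y (σseq n) a k ⌊(n : ℝ) * t⌋₊ ω|
            ≤ C * Real.sqrt (H n).c / σseq n := by
  refine ⟨2, two_pos, 0, ?_⟩
  intro n _ ω _ k _ _
  obtain ⟨hσ0, _⟩ := hσ n
  set M := ⌊(n : ℝ) * t⌋₊
  have hc0 : 0 < (H n).c := (H n).c_pos
  set z' : ℂ := Complex.exp (-(((H n).Θ k ω : ℂ) * Complex.I)) * (H n).Z (σseq n) a k M ω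
    with hz'def
  have hz' : Real.exp (σseq n) ≤ ‖z'‖ := by
    rw [hz'def, norm_mul, abs_exp_neg_mul_I, one_mul]
    exact (H n).abs_Z_ge hσ0 a k M ω
  obtain ⟨hXe, hYe⟩ := (H n).toHLSetup.main_est hσ0 hz'
  have hsq : 0 < Real.sqrt (H n).c := Real.sqrt_pos.2 hc0
  have hmagic : (Real.sqrt (H n).c)⁻¹ * (2 * (H n).c / σseq n)
      = 2 * Real.sqrt (H n).c / σseq n := by
    set s : ℝ := Real.sqrt (H n).c with hs
    have hss : s * s = (H n).c := by
      rw [hs]; exact Real.mul_self_sqrt hc0.le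
    rw [← hss]
    field_simp
  have hXb : |(H n).X (σseq n) a k M ω| ≤ 2 * Real.sqrt (H n).c / σseq n := by
    rw [HLModel.X, abs_mul, abs_of_nonneg (inv_nonneg.2 hsq.le)]
    rw [← hmagic]
    apply mul_le_mul_of_nonneg_left _ (inv_nonneg.2 hsq.le)
    exact hXe
  have hYb : |(H n).Y (σseq n) a k M ω| ≤ 2 * Real.sqrt (H n).c / σseq n := by
    rw [HLModel.Y, abs_mul, abs_of_nonneg (inv_nonneg.2 hsq.le)]
    rw [← hmagic]
    apply mul_le_mul_of_nonneg_left _ (inv_nonneg.2 hsq.le)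
    exact hYe
  exact max_le hXb hYb
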